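/- Let x ∈ ℝ^n be Gaussian with x ∼ N(m, L L^*) and let y given x satisfy y ∼ N(A x + b, B B^*), with A ∈ ℝ^{k×n}, B ∈ ℝ^{k×r}. Suppose the matrix [[A L, B],[L, 0]] has an LQ-type factorization [[A L, B],[L, 0]] = [[L₁, 0],[L_⋆, L₂]] · [T₁; T₂] with [T₁; T₂] having orthonormal rows (T₁ T₁^* = I, T₂ T₂^* = I, T₁ T₂^* = 0) and L₁ invertible. Then: (i) the marginal distribution of y is N(A m + b, L₁ L₁^*); (ii) with K := L_⋆ L₁^{-1}, the conditional distribution of x given y is N(m − K(A m + b − y), L₂ L₂^*). In particular L₁ L₁^* = A L L^* A^* + B B^*, K L₁ L₁^* = L L^* A^*, and L₂ L₂^* = L L^* − K L₁ L₁^* K^*. -/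

import Mathlib

open Matrix

/-!
Since `[T₁; T₂]` has orthonormal rows, multiplying the factorization by its own transpose
cancels that factor and identifies the Gram matrices of the two block matrices. Reading
that identity block by block gives `L₁ L₁ᵀ = A L Lᵀ Aᵀ + B Bᵀ`, `L_⋆ L₁ᵀ = L Lᵀ Aᵀ` and
`L Lᵀ = L_⋆ L_⋆ᵀ + L₂ L₂ᵀ`. As `K L₁ = L_⋆`, these are the gain and covariance identities,
and the mean formula follows by writing `K = (L Lᵀ Aᵀ)(L₁ L₁ᵀ)⁻¹`.
-/

namespace Matrix

variable {R : Type*} [CommRing R] {l m n o p : Type*}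

theorem fromRows_mul_transpose_fromRows_eq_one [Fintype n] [DecidableEq l] [DecidableEq m]
    {T₁ : Matrix l n R} {T₂ : Matrix m n R}
    (h₁ : T₁ * T₁ᵀ = 1) (h₂ : T₂ * T₂ᵀ = 1) (h₁₂ : T₁ * T₂ᵀ = 0) :
    fromRows T₁ T₂ * (fromRows T₁ T₂)ᵀ = 1 := by
  have h₂₁ : T₂ * T₁ᵀ = 0 := by
    rw [← transpose_transpose T₂, ← transpose_mul, h₁₂, transpose_zero]
  rw [transpose_fromRows, fromRows_mul_fromCols, h₁, h₂, h₁₂, h₂₁, fromBlocks_one]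

theorem mul_mul_transpose_mul_of_mul_transpose_eq_one [Fintype n] [Fintype p] [DecidableEq n]
    (F : Matrix o n R) {T : Matrix n p R} (hT : T * Tᵀ = 1) :
    F * T * (F * T)ᵀ = F * Fᵀ := by
  rw [transpose_mul, Matrix.mul_assoc, ← Matrix.mul_assoc T, hT, Matrix.one_mul]

theorem fromBlocks_mul_transpose_fromBlocks [Fintype l] [Fintype m]
    (P : Matrix o l R) (Q : Matrix o m R) (U : Matrix p l R) (V : Matrix p m R) :
    fromBlocks P Q U V * (fromBlocks P Q U V)ᵀ =
      fromBlocks (P * Pᵀ + Q * Qᵀ) (P * Uᵀ + Q * Vᵀ) (U * Pᵀ + V * Qᵀ) (U * Uᵀ + V * Vᵀ) := by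
  rw [fromBlocks_transpose, fromBlocks_multiply]

theorem gram_eq_of_fromBlocks_eq_mul [Fintype l] [Fintype m] [Fintype o] [Fintype p]
    [DecidableEq o] [DecidableEq p]
    {M₁₁ : Matrix o l R} {M₁₂ : Matrix o m R} {M₂₁ : Matrix p l R}
    {L₁ : Matrix o o R} {Ls : Matrix p o R} {L₂ : Matrix p p R}
    {T₁ : Matrix o (l ⊕ m) R} {T₂ : Matrix p (l ⊕ m) R}
    (hfac : fromBlocks M₁₁ M₁₂ M₂₁ 0 = fromBlocks L₁ 0 Ls L₂ * fromRows T₁ T₂)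
    (hT₁ : T₁ * T₁ᵀ = 1) (hT₂ : T₂ * T₂ᵀ = 1) (hT₁₂ : T₁ * T₂ᵀ = 0) :
    M₁₁ * M₁₁ᵀ + M₁₂ * M₁₂ᵀ = L₁ * L₁ᵀ ∧ M₂₁ * M₁₁ᵀ = Ls * L₁ᵀ ∧
      M₂₁ * M₂₁ᵀ = Ls * Lsᵀ + L₂ * L₂ᵀ := by
  have hgram := congrArg (fun M : Matrix (o ⊕ p) (l ⊕ m) R => M * Mᵀ) hfac
  rw [mul_mul_transpose_mul_of_mul_transpose_eq_one _
    (fromRows_mul_transpose_fromRows_eq_one hT₁ hT₂ hT₁₂), fromBlocks_mul_transpose_fromBlocks,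
    fromBlocks_mul_transpose_fromBlocks, fromBlocks_inj] at hgram
  obtain ⟨h₁₁, -, h₂₁, h₂₂⟩ := hgram
  simp only [transpose_zero, Matrix.mul_zero, Matrix.zero_mul, add_zero] at h₁₁ h₂₁ h₂₂
  exact ⟨h₁₁, h₂₁, h₂₂⟩

end Matrix

/-- Gaussian conditioning in square-root form: with prior `x ∼ N(m, L L^*)` and likelihood
`y | x ∼ N(A x + b, B B^*)`, if `[[A L, B],[L, 0]] = [[L₁, 0],[L_⋆, L₂]]·[T₁; T₂]` with
`[T₁; T₂]` having orthonormal rows and `L₁` invertible, and `K = L_⋆ L₁⁻¹`, then the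
marginal of `y` is `N(A m + b, L₁ L₁^*)` and the conditional of `x` given `y` is
`N(m − K(A m + b − y), L₂ L₂^*)`; i.e. `L₁ L₁^* = A L L^* A^* + B B^*`,
`K L₁ L₁^* = L L^* A^*`, `L₂ L₂^* = L L^* − K L₁ L₁^* K^*`, and the conditional-mean
formula matches the classical Gaussian conditioning formula for every `y`. -/
theorem stmt_4 (n k r : ℕ)
    (b : Fin k → ℝ) (mx : Fin n → ℝ)
    (L : Matrix (Fin n) (Fin n) ℝ)
    (A : Matrix (Fin k) (Fin n) ℝ)
    (B : Matrix (Fin k) (Fin r) ℝ)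
    (L₁ : Matrix (Fin k) (Fin k) ℝ)
    (Ls : Matrix (Fin n) (Fin k) ℝ)
    (L₂ : Matrix (Fin n) (Fin n) ℝ)
    (T₁ : Matrix (Fin k) (Fin n ⊕ Fin r) ℝ)
    (T₂ : Matrix (Fin n) (Fin n ⊕ Fin r) ℝ)
    (hfac : Matrix.fromBlocks (A * L) B L (0 : Matrix (Fin n) (Fin r) ℝ)
        = Matrix.fromBlocks L₁ 0 Ls L₂ * Matrix.fromRows T₁ T₂)
    (hT₁ : T₁ * T₁ᵀ = 1) (hT₂ : T₂ * T₂ᵀ = 1) (hT₁₂ : T₁ * T₂ᵀ = 0)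
    (hL₁ : IsUnit L₁)
    (K : Matrix (Fin n) (Fin k) ℝ) (hK : K = Ls * L₁⁻¹) :
    -- (i) marginal covariance of y
    L₁ * L₁ᵀ = A * (L * Lᵀ) * Aᵀ + B * Bᵀ
      -- (ii) gain identity
      ∧ K * (L₁ * L₁ᵀ) = (L * Lᵀ) * Aᵀ
      -- conditional covariance
      ∧ L₂ * L₂ᵀ = L * Lᵀ - K * (L₁ * L₁ᵀ) * Kᵀ
      -- conditional mean matches the classical Gaussian conditioning formula
      ∧ ∀ y : Fin k → ℝ,
          mx - K *ᵥ (A *ᵥ mx + b - y)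
            = mx + ((L * Lᵀ) * Aᵀ) *ᵥ
                ((A * (L * Lᵀ) * Aᵀ + B * Bᵀ)⁻¹ *ᵥ (y - A *ᵥ mx - b)) := by
  obtain ⟨hcov, hcross, hprior⟩ := gram_eq_of_fromBlocks_eq_mul hfac hT₁ hT₂ hT₁₂
  have hdet : IsUnit L₁.det := (isUnit_iff_isUnit_det L₁).mp hL₁
  have hKL : K * L₁ = Ls := by rw [hK, nonsing_inv_mul_cancel_right _ _ hdet]
  have hS : L₁ * L₁ᵀ = A * (L * Lᵀ) * Aᵀ + B * Bᵀ := by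
    rw [← hcov, transpose_mul]
    simp only [Matrix.mul_assoc]
  have hgain : K * (L₁ * L₁ᵀ) = L * Lᵀ * Aᵀ := by
    rw [← Matrix.mul_assoc, hKL, ← hcross, transpose_mul, Matrix.mul_assoc]
  have hposterior : K * (L₁ * L₁ᵀ) * Kᵀ = Ls * Lsᵀ := by
    rw [← hKL, transpose_mul]
    simp only [Matrix.mul_assoc]
  refine ⟨hS, hgain, by rw [hprior, hposterior, add_sub_cancel_left], fun y => ?_⟩
  have hSdet : IsUnit (L₁ * L₁ᵀ).det := by
    rw [det_mul, det_transpose]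
    exact hdet.mul hdet
  have hKeq : K = L * Lᵀ * Aᵀ * (L₁ * L₁ᵀ)⁻¹ := by
    rw [← hgain, mul_nonsing_inv_cancel_right _ _ hSdet]
  rw [hKeq, ← hS, ← mulVec_mulVec, sub_sub, ← neg_sub (A *ᵥ mx + b) y, mulVec_neg, mulVec_neg,
    sub_eq_add_neg]
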